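/- arXiv:1506.04890 — 2 statements merged into one kernel-verified Lean document; each statement's English description precedes it below -/
import Mathlib

section
/- Let K be a field and B a nonzero commutative K-algebra such that the multiplication map B ⊗_K B → B is an isomorphism. Then the structure map K → B is bijective. -/
open TensorProduct

namespace LinearMap

variable {R B : Type*} [CommSemiring R] [Semiring B] [Algebra R B]

theorem tmul_one_eq_one_tmul_of_injective_mul' (hmul : Function.Injective (mul' R B)) (b : B) :
    b ⊗ₜ[R] (1 : B) = 1 ⊗ₜ b :=
  hmul <| by simp only [mul'_apply, mul_one, one_mul]

/-- Applying `f ⊗ id` to `b ⊗ 1 = 1 ⊗ b` gives `f b • 1 = f 1 • b = b`. -/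
theorem algebraMap_surjective_of_injective_mul' (f : B →ₗ[R] R) (hf : f 1 = 1)
    (hmul : Function.Injective (mul' R B)) : Function.Surjective (algebraMap R B) := by
  intro b
  refine ⟨f b, ?_⟩
  have key := congrArg (TensorProduct.lid R B ∘ map f LinearMap.id)
    (tmul_one_eq_one_tmul_of_injective_mul' hmul b)
  simpa only [Function.comp_apply, map_tmul, lid_tmul, id_apply, hf, one_smul,
    Algebra.algebraMap_eq_smul_one] using key

end LinearMap

theorem stmt8 (K : Type*) [Field K] (B : Type*) [CommRing B] [Nontrivial B] [Algebra K B]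
    (hmul : Function.Bijective (LinearMap.mul' K B)) :
    Function.Bijective (algebraMap K B) := by
  obtain ⟨f, hf⟩ := (Algebra.linearMap K B).exists_leftInverse_of_injective
    (LinearMap.ker_eq_bot.mpr (algebraMap K B).injective)
  have hf1 : f 1 = 1 := by simpa using LinearMap.congr_fun hf 1
  exact ⟨(algebraMap K B).injective,
    LinearMap.algebraMap_surjective_of_injective_mul' f hf1 hmul.injective⟩
end

section
/- Let A be an integral domain, and let B₁ and B₂ be nonzero flat A-algebras. Then B₁ ⊗_A B₂ is nonzero. -/
open TensorProduct

lemma flat_algebraMap_injective (A B : Type*) [CommRing A] [IsDomain A]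
    [CommRing B] [Nontrivial B] [Algebra A B] [Module.Flat A B] :
    Function.Injective (algebraMap A B) := by
  rw [injective_iff_map_eq_zero]
  intro a ha
  by_contra h
  have hreg : IsSMulRegular A a := fun x y hxy => by
    simpa using mul_left_cancel₀ h (by simpa [smul_eq_mul] using hxy)
  have h2 : IsSMulRegular (A ⊗[A] B) a := hreg.rTensor B
  have h3 : IsSMulRegular B a := by
    refine ((TensorProduct.lid A B).toEquiv.isSMulRegular_congr ?_).mp h2
    intro x; exact map_smul (TensorProduct.lid A B) a x
  have : a • (1 : B) = a • (0 : B) := by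
    simp [Algebra.algebraMap_eq_smul_one] at ha
    simp [ha]
  exact one_ne_zero (h3 this)

theorem stmt10 (A B₁ B₂ : Type*) [CommRing A] [IsDomain A]
    [CommRing B₁] [Nontrivial B₁] [Algebra A B₁] [Module.Flat A B₁]
    [CommRing B₂] [Nontrivial B₂] [Algebra A B₂] [Module.Flat A B₂] :
    Nontrivial (B₁ ⊗[A] B₂) := by
  have hinj : Function.Injective (Algebra.linearMap A B₁) :=
    flat_algebraMap_injective A B₁
  have h2 : Function.Injective
      (LinearMap.rTensor B₂ (Algebra.linearMap A B₁)) :=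
    Module.Flat.rTensor_preserves_injective_linearMap _ hinj
  have : Nontrivial (A ⊗[A] B₂) := (TensorProduct.lid A B₂).toEquiv.nontrivial
  obtain ⟨x, y, hxy⟩ := this
  exact ⟨_, _, fun hh => hxy (h2 hh)⟩
end
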